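/- Let n ≥ 3 be an integer, let h satisfy hypotheses (H), let k ≥ 1 be an integer, and suppose there exist C2 > C1 > 0 and 0 < R1 < R such that h(r) ≤ C2 for all 0 ≤ r ≤ R and h(r) ≥ C1 for all 0 ≤ r ≤ R1. Suppose γ > 0, suppose σ_(k+1)(g_h)/σ_(k)(g_h) ≥ λ_(k+1)/λ_(k) − γ, and let a_k be a minimizer for σ_(k)(g_h) normalized so that a_k(0) = 1. Then ∫₀^{R1} (a_k'(r))² dr ≤ γ ρ. -/

import Mathlib

open MeasureTheory Set

/-- Hypotheses (H): `h` is smooth on `[0,R]`, positive on `[0,R)`, `h(R)=0`,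
`h'(R) = -1`, and all even-order derivatives of `h` vanish at `R`. -/
def SatisfiesH (R : ℝ) (h : ℝ → ℝ) : Prop :=
  ContDiffOn ℝ (⊤ : ℕ∞) h (Set.Icc 0 R) ∧
  (∀ r ∈ Set.Ico (0:ℝ) R, 0 < h r) ∧
  h R = 0 ∧
  derivWithin h (Set.Icc 0 R) R = -1 ∧
  ∀ k : ℕ, iteratedDerivWithin (2 * k) h (Set.Icc 0 R) R = 0

/-- The `k`-th distinct eigenvalue `λ_(k) = k (n + k - 2)` of the Laplacian on the
round unit sphere `S^{n-1}`. -/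
noncomputable def sphereEig (n k : ℕ) : ℝ := (k : ℝ) * ((n : ℝ) + (k : ℝ) - 2)

/-- The Rayleigh quotient
`R_λ(a; h) = (∫₀^R ((a')² h^{n-1} + λ a² h^{n-3}))/(a(0)² h(0)^{n-1})`. -/
noncomputable def rayleighQ (R : ℝ) (n : ℕ) (lam : ℝ) (h a : ℝ → ℝ) : ℝ :=
  (∫ r in (0:ℝ)..R,
      (deriv a r) ^ 2 * h r ^ ((n : ℤ) - 1) + lam * (a r) ^ 2 * h r ^ ((n : ℤ) - 3)) /
    ((a 0) ^ 2 * h 0 ^ ((n : ℤ) - 1))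

/-- Admissible test functions: Lipschitz on `[0,R]`, vanishing at `R`, nonzero at `0`. -/
def IsAdmissible (R : ℝ) (a : ℝ → ℝ) : Prop :=
  (∃ K : NNReal, LipschitzOnWith K a (Set.Icc 0 R)) ∧ a R = 0 ∧ a 0 ≠ 0

/-- The `k`-th distinct Steklov eigenvalue of the ball `[0,R] × S^{n-1}` with the
revolution metric `g_h`, characterized variationally. -/
noncomputable def steklov (R : ℝ) (n k : ℕ) (h : ℝ → ℝ) : ℝ :=
  sInf { v : ℝ | ∃ a : ℝ → ℝ, IsAdmissible R a ∧ v = rayleighQ R n (sphereEig n k) h a }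

/-- `a` is a minimizer realizing `σ_(k)(g_h)`. -/
def IsMinimizer (R : ℝ) (n k : ℕ) (h a : ℝ → ℝ) : Prop :=
  IsAdmissible R a ∧ rayleighQ R n (sphereEig n k) h a = steklov R n k h

/-!
Write `A = ∫₀^R a'² h^{n-1}` and `B = ∫₀^R a² h^{n-3}`, so that `h(0)^{n-1} σ_(k) = A + λ_(k) B`.
Testing `σ_(k+1)` with `a` itself gives `h(0)^{n-1} σ_(k+1) ≤ A + λ_(k+1) B`, and together with
the ratio hypothesis this leaves `(λ_(k+1) - λ_(k)) A ≤ γ λ_(k) h(0)^{n-1} σ_(k)`. Testing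
`σ_(k)` with the cutoff `min 1 ((R - r)/(R - R1))` bounds `σ_(k)` by the two-sided bounds on
`h`, and `h ≥ C1` on `[0, R1]` turns the bound on `A` into one on `∫₀^{R1} a'²`.
-/

open Filter Topology

theorem LipschitzOnWith.intervalIntegrable_deriv_sq {K : NNReal} {f : ℝ → ℝ} {x y : ℝ}
    (hxy : x ≤ y) (hf : LipschitzOnWith K f (Icc x y)) :
    IntervalIntegrable (fun r => deriv f r ^ 2) volume x y := by
  rw [intervalIntegrable_iff_integrableOn_Ioo_of_le hxy]
  refine Measure.integrableOn_of_bounded (M := (K : ℝ) ^ 2) measure_Ioo_lt_top.ne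
    ((measurable_deriv f).pow_const 2).aestronglyMeasurable ?_
  filter_upwards [ae_restrict_mem measurableSet_Ioo] with r hr
  rw [norm_pow]
  exact pow_le_pow_left₀ (norm_nonneg _)
    (norm_deriv_le_of_lipschitzOn (Icc_mem_nhds hr.1 hr.2) hf) 2

theorem LipschitzOnWith.intervalIntegrable_deriv_sq_mul {K : NNReal} {f g : ℝ → ℝ} {x y : ℝ}
    (hxy : x ≤ y) (hf : LipschitzOnWith K f (Icc x y)) (hg : ContinuousOn g (Icc x y)) :
    IntervalIntegrable (fun r => deriv f r ^ 2 * g r) volume x y :=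
  (hf.intervalIntegrable_deriv_sq hxy).mul_continuousOn (by rwa [uIcc_of_le hxy])

theorem sub_mul_le_of_ratio_ge {A B D lam mu γ σ τ : ℝ} (hlam : 0 < lam) (hD : 0 < D)
    (hσ : 0 < σ) (hσeq : D * σ = A + lam * B) (hτ : D * τ ≤ A + mu * B)
    (hratio : mu / lam - γ ≤ τ / σ) : (mu - lam) * A ≤ γ * lam * (D * σ) := by
  have h1 : (mu - γ * lam) * σ ≤ lam * τ := by
    have := mul_le_mul_of_nonneg_left ((le_div_iff₀ hσ).1 hratio) hlam.le
    rwa [← mul_assoc, mul_sub, mul_div_cancel₀ _ hlam.ne', mul_comm lam γ] at this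
  linear_combination mul_le_mul_of_nonneg_left h1 hD.le + mul_le_mul_of_nonneg_left hτ hlam.le
    - mu * hσeq

theorem sphereEig_pos {n k : ℕ} (hn : 2 ≤ n) (hk : 1 ≤ k) : 0 < sphereEig n k := by
  unfold sphereEig
  have : (2 : ℝ) ≤ n := by exact_mod_cast hn
  have : (1 : ℝ) ≤ k := by exact_mod_cast hk
  nlinarith

theorem sphereEig_lt_sphereEig_succ {n : ℕ} (hn : 2 ≤ n) (k : ℕ) :
    sphereEig n k < sphereEig n (k + 1) := by
  unfold sphereEig
  have : (2 : ℝ) ≤ n := by exact_mod_cast hn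
  push_cast
  nlinarith [(k.cast_nonneg : (0 : ℝ) ≤ k)]

theorem SatisfiesH.nonneg {R : ℝ} {h : ℝ → ℝ} (hH : SatisfiesH R h) :
    ∀ r ∈ Icc 0 R, 0 ≤ h r := fun r hr =>
  hr.2.eq_or_lt.elim (fun hrR => hrR ▸ hH.2.2.1.ge) fun hrR => (hH.2.1 r ⟨hr.1, hrR⟩).le

noncomputable def radialDirichlet (R : ℝ) (p : ℕ) (h a : ℝ → ℝ) : ℝ :=
  ∫ r in (0:ℝ)..R, deriv a r ^ 2 * h r ^ p

noncomputable def radialMass (R : ℝ) (q : ℕ) (h a : ℝ → ℝ) : ℝ :=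
  ∫ r in (0:ℝ)..R, a r ^ 2 * h r ^ q

section Radial

variable {R : ℝ} {n : ℕ} {h a : ℝ → ℝ}

theorem rayleighQ_nonneg (hR : 0 ≤ R) (hh : ∀ r ∈ Icc 0 R, 0 ≤ h r) {lam : ℝ} (hlam : 0 ≤ lam) :
    0 ≤ rayleighQ R n lam h a := by
  refine div_nonneg (intervalIntegral.integral_nonneg hR fun r hr => ?_)
    (mul_nonneg (sq_nonneg _) (zpow_nonneg (hh 0 ⟨le_rfl, hR⟩) _))
  have := hh r hr
  positivity

theorem steklov_le_rayleighQ (hR : 0 ≤ R) (hh : ∀ r ∈ Icc 0 R, 0 ≤ h r) {k : ℕ}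
    (hlam : 0 ≤ sphereEig n k) (ha : IsAdmissible R a) :
    steklov R n k h ≤ rayleighQ R n (sphereEig n k) h a :=
  csInf_le ⟨0, by rintro v ⟨b, -, rfl⟩; exact rayleighQ_nonneg hR hh hlam⟩ ⟨a, ha, rfl⟩

theorem rayleighQ_eq {K : NNReal} (hn : 3 ≤ n) (hR : 0 ≤ R) (hh : ContinuousOn h (Icc 0 R))
    (ha : LipschitzOnWith K a (Icc 0 R)) (lam : ℝ) :
    rayleighQ R n lam h a =
      (radialDirichlet R (n - 1) h a + lam * radialMass R (n - 3) h a) /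
        (a 0 ^ 2 * h 0 ^ (n - 1)) := by
  have h1 : (n : ℤ) - 1 = ((n - 1 : ℕ) : ℤ) := by omega
  have h3 : (n : ℤ) - 3 = ((n - 3 : ℕ) : ℤ) := by omega
  have hD : IntervalIntegrable (fun r => deriv a r ^ 2 * h r ^ (n - 1)) volume 0 R :=
    ha.intervalIntegrable_deriv_sq_mul hR (hh.pow _)
  have hM : IntervalIntegrable (fun r => a r ^ 2 * h r ^ (n - 3)) volume 0 R :=
    ((ha.continuousOn.pow 2).mul (hh.pow _)).intervalIntegrable_of_Icc hR
  simp only [rayleighQ, radialDirichlet, radialMass, h1, h3, zpow_natCast, mul_assoc]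
  rw [intervalIntegral.integral_add hD (hM.const_mul lam), intervalIntegral.integral_const_mul]

theorem radialMass_pos (q : ℕ) (hR : 0 < R) (hh : ContinuousOn h (Icc 0 R))
    (hh0 : ∀ r ∈ Icc 0 R, 0 ≤ h r) (h0 : 0 < h 0) (ha : ContinuousOn a (Icc 0 R))
    (ha0 : a 0 ≠ 0) : 0 < radialMass R q h a :=
  intervalIntegral.integral_pos hR ((ha.pow 2).mul (hh.pow q))
    (fun r hr => mul_nonneg (sq_nonneg _) (pow_nonneg (hh0 r (Ioc_subset_Icc_self hr)) _))
    ⟨0, ⟨le_rfl, hR.le⟩, by positivity⟩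

theorem mul_integral_deriv_sq_le_radialDirichlet {K : NNReal} {R1 C1 : ℝ} (p : ℕ)
    (hR1 : 0 ≤ R1) (hR1R : R1 ≤ R) (hh : ContinuousOn h (Icc 0 R))
    (hh0 : ∀ r ∈ Icc 0 R, 0 ≤ h r) (hC1 : 0 ≤ C1) (hlb : ∀ r ∈ Icc 0 R1, C1 ≤ h r)
    (ha : LipschitzOnWith K a (Icc 0 R)) :
    C1 ^ p * ∫ r in (0:ℝ)..R1, deriv a r ^ 2 ≤ radialDirichlet R p h a := by
  have hsub : Icc 0 R1 ⊆ Icc 0 R := Icc_subset_Icc_right hR1R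
  calc C1 ^ p * ∫ r in (0:ℝ)..R1, deriv a r ^ 2
      = ∫ r in (0:ℝ)..R1, C1 ^ p * deriv a r ^ 2 := (intervalIntegral.integral_const_mul _ _).symm
    _ ≤ ∫ r in (0:ℝ)..R1, deriv a r ^ 2 * h r ^ p := by
        refine intervalIntegral.integral_mono_on hR1
          (((ha.mono hsub).intervalIntegrable_deriv_sq hR1).const_mul _)
          ((ha.mono hsub).intervalIntegrable_deriv_sq_mul hR1 ((hh.mono hsub).pow p))
          fun r hr => ?_
        rw [mul_comm]
        gcongr
        exact hlb r hr
    _ ≤ radialDirichlet R p h a :=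
        intervalIntegral.integral_mono_interval le_rfl hR1 hR1R
          ((ae_restrict_iff' measurableSet_Ioc).2 (ae_of_all _ fun r hr =>
            mul_nonneg (sq_nonneg _) (pow_nonneg (hh0 r (Ioc_subset_Icc_self hr)) _)))
          (ha.intervalIntegrable_deriv_sq_mul (hR1.trans hR1R) (hh.pow p))

end Radial

noncomputable def rampDown (R1 R r : ℝ) : ℝ := min 1 ((R - r) / (R - R1))

section Ramp

variable {R1 R : ℝ}

theorem lipschitzWith_rampDown (hR1R : R1 < R) :
    LipschitzWith (Real.toNNReal (R - R1)⁻¹) (rampDown R1 R) := by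
  refine LipschitzWith.const_min (LipschitzWith.of_dist_le_mul fun x y => ?_) 1
  have hc : 0 ≤ (R - R1)⁻¹ := inv_nonneg.2 (sub_pos.2 hR1R).le
  rw [Real.dist_eq, Real.dist_eq, Real.coe_toNNReal _ hc, ← sub_div, div_eq_mul_inv, abs_mul,
    abs_of_nonneg hc, sub_sub_sub_cancel_left, abs_sub_comm, mul_comm]

theorem rampDown_of_le (hR1R : R1 < R) {r : ℝ} (hr : r ≤ R1) : rampDown R1 R r = 1 :=
  min_eq_left ((one_le_div (sub_pos.2 hR1R)).2 (by linarith))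

theorem rampDown_self : rampDown R1 R R = 0 := by simp [rampDown]

theorem rampDown_nonneg (hR1R : R1 < R) {r : ℝ} (hr : r ≤ R) : 0 ≤ rampDown R1 R r :=
  le_min zero_le_one (div_nonneg (sub_nonneg.2 hr) (sub_pos.2 hR1R).le)

theorem rampDown_le_one (r : ℝ) : rampDown R1 R r ≤ 1 := min_le_left _ _

theorem deriv_rampDown_of_lt (hR1R : R1 < R) {r : ℝ} (hr : r < R1) :
    deriv (rampDown R1 R) r = 0 := by
  have hconst : rampDown R1 R =ᶠ[𝓝 r] fun _ => 1 :=
    eventually_of_mem (Iio_mem_nhds hr) fun x hx => rampDown_of_le hR1R (le_of_lt hx)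
  rw [hconst.deriv_eq, deriv_const]

theorem abs_deriv_rampDown_le (hR1R : R1 < R) (r : ℝ) :
    |deriv (rampDown R1 R) r| ≤ (R - R1)⁻¹ := by
  simpa [← Real.norm_eq_abs, Real.coe_toNNReal _ (inv_nonneg.2 (sub_pos.2 hR1R).le)] using
    norm_deriv_le_of_lipschitz (x₀ := r) (lipschitzWith_rampDown hR1R)

theorem isAdmissible_rampDown (hR1 : 0 ≤ R1) (hR1R : R1 < R) :
    IsAdmissible R (rampDown R1 R) :=
  ⟨⟨_, (lipschitzWith_rampDown hR1R).lipschitzOnWith⟩, rampDown_self,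
    by rw [rampDown_of_le hR1R hR1]; exact one_ne_zero⟩

variable {h : ℝ → ℝ} {C : ℝ}

theorem radialDirichlet_rampDown_le (p : ℕ) (hR1 : 0 ≤ R1) (hR1R : R1 < R)
    (hh : ContinuousOn h (Icc 0 R)) (hh0 : ∀ r ∈ Icc 0 R, 0 ≤ h r)
    (hub : ∀ r ∈ Icc 0 R, h r ≤ C) :
    radialDirichlet R p h (rampDown R1 R) ≤ C ^ p / (R - R1) := by
  have hL := (lipschitzWith_rampDown hR1R).lipschitzOnWith (s := Icc 0 R)
  have hint {x y : ℝ} (hx : 0 ≤ x) (hxy : x ≤ y) (hy : y ≤ R) :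
      IntervalIntegrable (fun r => deriv (rampDown R1 R) r ^ 2 * h r ^ p) volume x y :=
    (hL.mono (Icc_subset_Icc hx hy)).intervalIntegrable_deriv_sq_mul hxy
      ((hh.mono (Icc_subset_Icc hx hy)).pow p)
  have hflat : ∫ r in (0:ℝ)..R1, deriv (rampDown R1 R) r ^ 2 * h r ^ p ≤ 0 := by
    refine (intervalIntegral.integral_mono_on_of_le_Ioo hR1 (hint le_rfl hR1 hR1R.le)
      intervalIntegrable_const fun r hr => ?_).trans_eq intervalIntegral.integral_zero
    rw [deriv_rampDown_of_lt hR1R hr.2]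
    simp
  have hslope : ∫ r in R1..R, deriv (rampDown R1 R) r ^ 2 * h r ^ p ≤
      ∫ _ in R1..R, (R - R1)⁻¹ ^ 2 * C ^ p := by
    refine intervalIntegral.integral_mono_on hR1R.le (hint hR1 hR1R.le le_rfl)
      intervalIntegrable_const fun r hr => ?_
    have hr' : r ∈ Icc 0 R := ⟨hR1.trans hr.1, hr.2⟩
    have hr0 := hh0 r hr'
    refine mul_le_mul ?_ (pow_le_pow_left₀ hr0 (hub r hr') p) (pow_nonneg hr0 p) (sq_nonneg _)
    rw [← sq_abs]
    exact pow_le_pow_left₀ (abs_nonneg _) (abs_deriv_rampDown_le hR1R r) 2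
  rw [intervalIntegral.integral_const, smul_eq_mul] at hslope
  have hRR1 : R - R1 ≠ 0 := (sub_pos.2 hR1R).ne'
  calc radialDirichlet R p h (rampDown R1 R)
      = (∫ r in (0:ℝ)..R1, deriv (rampDown R1 R) r ^ 2 * h r ^ p) +
          ∫ r in R1..R, deriv (rampDown R1 R) r ^ 2 * h r ^ p :=
        (intervalIntegral.integral_add_adjacent_intervals (hint le_rfl hR1 hR1R.le)
          (hint hR1 hR1R.le le_rfl)).symm
    _ ≤ 0 + (R - R1) * ((R - R1)⁻¹ ^ 2 * C ^ p) := add_le_add hflat hslope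
    _ = C ^ p / (R - R1) := by field_simp; ring

theorem radialMass_rampDown_le (q : ℕ) (hR1R : R1 < R) (hR : 0 ≤ R)
    (hh : ContinuousOn h (Icc 0 R)) (hh0 : ∀ r ∈ Icc 0 R, 0 ≤ h r)
    (hub : ∀ r ∈ Icc 0 R, h r ≤ C) :
    radialMass R q h (rampDown R1 R) ≤ C ^ q * R := by
  calc radialMass R q h (rampDown R1 R) ≤ ∫ _ in (0:ℝ)..R, C ^ q := by
        refine intervalIntegral.integral_mono_on hR
          ((((lipschitzWith_rampDown hR1R).continuous.continuousOn.pow 2).mul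
            (hh.pow q)).intervalIntegrable_of_Icc hR) intervalIntegrable_const fun r hr => ?_
        have hr0 := hh0 r hr
        calc rampDown R1 R r ^ 2 * h r ^ q ≤ 1 ^ 2 * C ^ q := by
              gcongr
              · exact rampDown_nonneg hR1R hr.2
              · exact rampDown_le_one r
              · exact hub r hr
          _ = C ^ q := by ring
    _ = C ^ q * R := by simp [mul_comm]

end Ramp

section Steklov

variable {R : ℝ} {n : ℕ} {h a : ℝ → ℝ}

theorem steklov_nonneg (hR : 0 ≤ R) (hh : ∀ r ∈ Icc 0 R, 0 ≤ h r) {k : ℕ}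
    (hlam : 0 ≤ sphereEig n k) : 0 ≤ steklov R n k h :=
  Real.sInf_nonneg fun _ ⟨_, _, hv⟩ => hv ▸ rayleighQ_nonneg hR hh hlam

theorem steklov_le_of_bounds {R1 C1 C2 : ℝ} {k : ℕ} (hn : 3 ≤ n) (hR1 : 0 ≤ R1) (hR1R : R1 < R)
    (hh : ContinuousOn h (Icc 0 R)) (hh0 : ∀ r ∈ Icc 0 R, 0 ≤ h r)
    (hub : ∀ r ∈ Icc 0 R, h r ≤ C2) (hC1 : 0 < C1) (h0 : C1 ≤ h 0)
    (hlam : 0 ≤ sphereEig n k) :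
    steklov R n k h ≤
      (C2 ^ (n - 1) / (R - R1) + sphereEig n k * (C2 ^ (n - 3) * R)) / C1 ^ (n - 1) := by
  have hR : 0 ≤ R := hR1.trans hR1R.le
  have hC2 : 0 ≤ C2 := (hh0 0 ⟨le_rfl, hR⟩).trans (hub 0 ⟨le_rfl, hR⟩)
  have hRR1 : 0 < R - R1 := sub_pos.2 hR1R
  calc steklov R n k h ≤ rayleighQ R n (sphereEig n k) h (rampDown R1 R) :=
        steklov_le_rayleighQ hR hh0 hlam (isAdmissible_rampDown hR1 hR1R)
    _ = (radialDirichlet R (n - 1) h (rampDown R1 R) +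
          sphereEig n k * radialMass R (n - 3) h (rampDown R1 R)) / h 0 ^ (n - 1) := by
        rw [rayleighQ_eq hn hR hh (lipschitzWith_rampDown hR1R).lipschitzOnWith,
          rampDown_of_le hR1R hR1, one_pow, one_mul]
    _ ≤ _ := div_le_div₀ (by positivity)
        (add_le_add (radialDirichlet_rampDown_le _ hR1 hR1R hh hh0 hub)
          (mul_le_mul_of_nonneg_left (radialMass_rampDown_le _ hR1R hR hh hh0 hub) hlam))
        (pow_pos hC1 _) (pow_le_pow_left₀ hC1.le h0 _)

theorem IsMinimizer.sub_mul_radialDirichlet_le {k : ℕ} {γ : ℝ} (hn : 3 ≤ n) (hk : 1 ≤ k)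
    (hR : 0 < R) (hh : ContinuousOn h (Icc 0 R)) (hh0 : ∀ r ∈ Icc 0 R, 0 ≤ h r)
    (h0 : 0 < h 0) (ha : IsMinimizer R n k h a) (ha0 : a 0 = 1)
    (hratio : sphereEig n (k + 1) / sphereEig n k - γ ≤
      steklov R n (k + 1) h / steklov R n k h) :
    (sphereEig n (k + 1) - sphereEig n k) * radialDirichlet R (n - 1) h a ≤
      γ * sphereEig n k * (h 0 ^ (n - 1) * steklov R n k h) := by
  obtain ⟨hadm, hmin⟩ := ha
  obtain ⟨K, hK⟩ := hadm.1
  have hlam := sphereEig_pos (by omega : 2 ≤ n) hk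
  have hD : 0 < h 0 ^ (n - 1) := pow_pos h0 _
  have hQ (lam : ℝ) := rayleighQ_eq hn hR.le hh hK lam
  simp only [ha0, one_pow, one_mul] at hQ
  have hA : 0 ≤ radialDirichlet R (n - 1) h a :=
    intervalIntegral.integral_nonneg hR.le fun r hr =>
      mul_nonneg (sq_nonneg _) (pow_nonneg (hh0 r hr) _)
  have hB := radialMass_pos (n - 3) hR hh hh0 h0 hK.continuousOn hadm.2.2
  have hτ := steklov_le_rayleighQ (k := k + 1) hR.le hh0
    (sphereEig_pos (by omega : 2 ≤ n) (Nat.le_add_left 1 k)).le hadm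
  rw [← hmin, hQ] at hratio ⊢
  rw [hQ, le_div_iff₀' hD] at hτ
  refine sub_mul_le_of_ratio_ge hlam hD (by positivity) (mul_div_cancel₀ _ hD.ne') hτ hratio

end Steklov

theorem stmt_13_general (n : ℕ) (hn : 3 ≤ n) (R : ℝ) (hR : 0 < R) (h : ℝ → ℝ)
    (hH : SatisfiesH R h) (k : ℕ) (hk : 1 ≤ k)
    (C1 C2 R1 : ℝ) (hC1 : 0 < C1) (hR1 : 0 < R1) (hR1R : R1 < R)
    (hub : ∀ r ∈ Set.Icc (0:ℝ) R, h r ≤ C2)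
    (hlb : ∀ r ∈ Set.Icc (0:ℝ) R1, C1 ≤ h r)
    (γ : ℝ) (hγ : 0 < γ)
    (hratio : steklov R n (k + 1) h / steklov R n k h ≥
      sphereEig n (k + 1) / sphereEig n k - γ)
    (a : ℝ → ℝ) (ha : IsMinimizer R n k h a) (ha0 : a 0 = 1) :
    (∫ r in (0:ℝ)..R1, (deriv a r) ^ 2) ≤
      γ * ((C2 ^ (2 * (n - 2)) / C1 ^ (2 * (n - 1))) *
        (R * (sphereEig n k) ^ 2 + C2 ^ 2 * sphereEig n k / (R - R1)) /
        (sphereEig n (k + 1) - sphereEig n k)) := by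
  have hh : ContinuousOn h (Icc 0 R) := hH.1.continuousOn
  have hh0 := hH.nonneg
  have h0 : 0 < h 0 := hH.2.1 0 ⟨le_rfl, hR⟩
  have hlam := sphereEig_pos (by omega : 2 ≤ n) hk
  have hgap := sub_pos.2 (sphereEig_lt_sphereEig_succ (by omega : 2 ≤ n) k)
  obtain ⟨K, hK⟩ := ha.1.1
  have hlow :=
    mul_integral_deriv_sq_le_radialDirichlet (n - 1) hR1.le hR1R.le hh hh0 hC1.le hlb hK
  have hA := ha.sub_mul_radialDirichlet_le hn hk hR hh hh0 h0 ha0 hratio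
  have hσ := steklov_le_of_bounds hn hR1.le hR1R hh hh0 hub hC1 (hlb 0 ⟨le_rfl, hR1.le⟩) hlam.le
  have hσ0 := steklov_nonneg hR.le hh0 hlam.le (k := k)
  have hD : h 0 ^ (n - 1) ≤ C2 ^ (n - 1) := pow_le_pow_left₀ h0.le (hub 0 ⟨le_rfl, hR.le⟩) _
  calc (∫ r in (0:ℝ)..R1, deriv a r ^ 2) ≤ radialDirichlet R (n - 1) h a / C1 ^ (n - 1) :=
        (le_div_iff₀' (pow_pos hC1 _)).2 hlow
    _ ≤ γ * sphereEig n k * (C2 ^ (n - 1) * ((C2 ^ (n - 1) / (R - R1) +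
          sphereEig n k * (C2 ^ (n - 3) * R)) / C1 ^ (n - 1))) /
          (sphereEig n (k + 1) - sphereEig n k) / C1 ^ (n - 1) := by
        gcongr
        rw [le_div_iff₀' hgap]
        have hC2 : 0 ≤ C2 := h0.le.trans (hub 0 ⟨le_rfl, hR.le⟩)
        refine hA.trans ?_
        gcongr
    _ = _ := by
        obtain ⟨m, rfl⟩ := Nat.exists_eq_add_of_le' hn
        rw [show m + 3 - 1 = m + 2 by omega, show m + 3 - 3 = m by omega,
          show 2 * (m + 3 - 2) = 2 * m + 2 by omega]
        field_simp
        ring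

theorem stmt_13 (n : ℕ) (hn : 3 ≤ n) (R : ℝ) (hR : 0 < R) (h : ℝ → ℝ)
    (hH : SatisfiesH R h) (k : ℕ) (hk : 1 ≤ k)
    (C1 C2 R1 : ℝ) (hC1 : 0 < C1) (hC12 : C1 < C2) (hR1 : 0 < R1) (hR1R : R1 < R)
    (hub : ∀ r ∈ Set.Icc (0:ℝ) R, h r ≤ C2)
    (hlb : ∀ r ∈ Set.Icc (0:ℝ) R1, C1 ≤ h r)
    (γ : ℝ) (hγ : 0 < γ)
    (hratio : steklov R n (k + 1) h / steklov R n k h ≥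
      sphereEig n (k + 1) / sphereEig n k - γ)
    (a : ℝ → ℝ) (ha : IsMinimizer R n k h a) (ha0 : a 0 = 1) :
    (∫ r in (0:ℝ)..R1, (deriv a r) ^ 2) ≤
      γ * ((C2 ^ (2 * (n - 2)) / C1 ^ (2 * (n - 1))) *
        (R * (sphereEig n k) ^ 2 + C2 ^ 2 * sphereEig n k / (R - R1)) /
        (sphereEig n (k + 1) - sphereEig n k)) :=
  stmt_13_general n hn R hR h hH k hk C1 C2 R1 hC1 hR1 hR1R hub hlb γ hγ hratio a ha ha0
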